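/- Let Σ be a finite subset of a projective space ℙⁿ over a field, let D and e be natural numbers with e ≤ D, and suppose Σ is partitioned into two disjoint subsets Δ and Γ. Assume there is a homogeneous form H of degree e that vanishes at every point of Δ and vanishes at no point of Γ. If Δ imposes independent linear conditions on forms of degree D and Γ imposes independent linear conditions on forms of degree D − e, then Σ imposes independent linear conditions on forms of degree D. -/
import Mathlib


open MvPolynomial

noncomputable section

variable (K : Type) [Field K]

/-- Projective n-space over the field K. -/
abbrev PtK (K : Type) [Field K] (n : ℕ) := Projectivization K (Fin (n+1) → K)

/-- A homogeneous form vanishes at a point of projective space. -/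
def VanishesAtK {K : Type} [Field K] {n : ℕ} (F : MvPolynomial (Fin (n+1)) K)
    (p : PtK K n) : Prop :=
  ∀ (v : Fin (n+1) → K) (hv : v ≠ 0), p = Projectivization.mk K v hv → eval v F = 0

/-- A finite set imposes independent linear conditions on forms of degree `D`:
for each point `P` there is a degree-`D` form vanishing on the rest of the set
but not at `P`. -/
def ImposesIndependentConditionsK {K : Type} [Field K] {n : ℕ}
    (S : Finset (PtK K n)) (D : ℕ) : Prop :=
  ∀ P ∈ S, ∃ F : MvPolynomial (Fin (n+1)) K, F.IsHomogeneous D ∧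
    (∀ Q ∈ S, Q ≠ P → VanishesAtK F Q) ∧ ¬ VanishesAtK F P

lemma eval_smul_of_isHomogeneous {K : Type} [Field K] {n m : ℕ}
    {F : MvPolynomial (Fin (n+1)) K} (hF : F.IsHomogeneous m) (c : K) (v : Fin (n+1) → K) :
    eval (c • v) F = c ^ m * eval v F := by
  rw [eval_eq', eval_eq', Finset.mul_sum]
  apply Finset.sum_congr rfl
  intro d hd
  rw [mem_support_iff] at hd
  have hdeg : ∑ i, d i = m := by
    have := hF hd
    rw [Finsupp.weight_apply] at this
    rw [← this]
    rw [Finsupp.sum_fintype]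
    · simp
    · simp
  have : ∏ i, (c • v) i ^ d i = c ^ m * ∏ i, v i ^ d i := by
    simp only [Pi.smul_apply, smul_eq_mul, mul_pow]
    rw [Finset.prod_mul_distrib, Finset.prod_pow_eq_pow_sum, hdeg]
  rw [this]; ring

lemma vanishesAt_iff {K : Type} [Field K] {n m : ℕ}
    {F : MvPolynomial (Fin (n+1)) K} (hF : F.IsHomogeneous m)
    (v : Fin (n+1) → K) (hv : v ≠ 0) :
    VanishesAtK F (Projectivization.mk K v hv) ↔ eval v F = 0 := by
  constructor
  · intro h; exact h v hv rfl
  · intro h w hw hmk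
    obtain ⟨a, ha⟩ := (Projectivization.mk_eq_mk_iff K v w hv hw).1 hmk
    rw [Units.smul_def] at ha
    have := eval_smul_of_isHomogeneous hF (a : K) w
    rw [ha, h] at this
    exact (mul_eq_zero.1 this.symm).resolve_left (pow_ne_zero _ a.ne_zero)

/-- Swapping lemma: if Σ = Δ ⋔ Γ, a degree-e form H vanishes on Δ and nowhere on Γ,
Δ imposes independent conditions in degree D and Γ in degree D - e, then Σ imposes
independent conditions in degree D. -/
theorem swapping_lemma {K : Type} [Field K] (n D e : ℕ) (he : e ≤ D)
    (S₀ Δ Γ : Finset (PtK K n)) (hunion : ∀ x, x ∈ S₀ ↔ x ∈ Δ ∨ x ∈ Γ) (hdisj : Disjoint Δ Γ)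
    (H : MvPolynomial (Fin (n+1)) K) (hH : H.IsHomogeneous e)
    (hHΔ : ∀ P ∈ Δ, VanishesAtK H P) (hHΓ : ∀ P ∈ Γ, ¬ VanishesAtK H P)
    (hΔ : ImposesIndependentConditionsK Δ D)
    (hΓ : ImposesIndependentConditionsK Γ (D - e)) :
    ImposesIndependentConditionsK S₀ D := by
  have hED : e + (D - e) = D := Nat.add_sub_cancel' he
  intro P hP
  rcases (hunion P).1 hP with hPΔ | hPΓ
  · -- P ∈ Δ
    obtain ⟨F, hFh, hFvan, hFP⟩ := hΔ P hPΔ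
    choose G hGh hGvan hGQ using hΓ
    -- the correction coefficients
    set c : {Q // Q ∈ Γ} → K := fun Q =>
      eval Q.1.rep F / eval Q.1.rep (H * G Q.1 Q.2) with hc
    set F' : MvPolynomial (Fin (n+1)) K :=
      F - ∑ Q ∈ Γ.attach, C (c Q) * (H * G Q.1 Q.2) with hF'
    have hHrep : ∀ Q ∈ Γ, eval Q.rep H ≠ 0 := by
      intro Q hQ h0
      apply hHΓ Q hQ
      have := (vanishesAt_iff hH Q.rep Q.rep_nonzero).mpr h0
      rwa [Q.mk_rep] at this
    have hGrep : ∀ Q (hQ : Q ∈ Γ), eval Q.rep (G Q hQ) ≠ 0 := by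
      intro Q hQ h0
      apply hGQ Q hQ
      have := (vanishesAt_iff (hGh Q hQ) Q.rep Q.rep_nonzero).mpr h0
      rwa [Q.mk_rep] at this
    have hden : ∀ Q (hQ : Q ∈ Γ), eval Q.rep (H * G Q hQ) ≠ 0 := by
      intro Q hQ
      rw [eval_mul]
      exact mul_ne_zero (hHrep Q hQ) (hGrep Q hQ)
    have hF'h : F'.IsHomogeneous D := by
      apply hFh.sub
      apply IsHomogeneous.sum
      intro Q _
      have : (H * G Q.1 Q.2).IsHomogeneous D := by
        have := hH.mul (hGh Q.1 Q.2); rwa [hED] at this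
      exact this.C_mul _
    refine ⟨F', hF'h, ?_, ?_⟩
    · intro Q hQ hQP
      rcases (hunion Q).1 hQ with hQΔ | hQΓ
      · intro v hv hmk
        rw [hF', eval_sub, hFvan Q hQΔ hQP v hv hmk, map_sum]
        rw [Finset.sum_eq_zero, sub_zero]
        intro Q' _
        rw [eval_mul, eval_mul, hHΔ Q hQΔ v hv hmk, zero_mul, mul_zero]
      · rw [← Q.mk_rep, vanishesAt_iff hF'h]
        rw [hF', eval_sub, map_sum]
        rw [Finset.sum_eq_single_of_mem ⟨Q, hQΓ⟩ (Finset.mem_attach _ _)]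
        · rw [eval_mul, eval_C]
          show eval Q.rep F - eval Q.rep F / eval Q.rep (H * G Q hQΓ) * eval Q.rep (H * G Q hQΓ) = 0
          rw [div_mul_cancel₀ _ (hden Q hQΓ), sub_self]
        · intro Q' _ hne
          have hne' : Q ≠ Q'.1 := by
            intro h; exact hne (Subtype.ext h.symm)
          rw [eval_mul, eval_mul,
            hGvan Q' Q'.2 Q hQΓ hne' Q.rep Q.rep_nonzero Q.mk_rep.symm,
            mul_zero, mul_zero]
    · rw [← P.mk_rep, vanishesAt_iff hF'h]
      rw [hF', eval_sub, map_sum, Finset.sum_eq_zero, sub_zero]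
      · intro h0
        apply hFP
        have := (vanishesAt_iff hFh P.rep P.rep_nonzero).mpr h0
        rwa [P.mk_rep] at this
      · intro Q' _
        rw [eval_mul, eval_mul,
          hHΔ P hPΔ P.rep P.rep_nonzero P.mk_rep.symm, zero_mul, mul_zero]
  · -- P ∈ Γ
    obtain ⟨G, hGh, hGvan, hGP⟩ := hΓ P hPΓ
    have hHGh : (H * G).IsHomogeneous D := by
      have := hH.mul hGh; rwa [hED] at this
    refine ⟨H * G, hHGh, ?_, ?_⟩
    · intro Q hQ hQP v hv hmk
      rcases (hunion Q).1 hQ with hQΔ | hQΓ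
      · rw [eval_mul, hHΔ Q hQΔ v hv hmk, zero_mul]
      · rw [eval_mul, hGvan Q hQΓ hQP v hv hmk, mul_zero]
    · intro hvan
      have h0 : eval P.rep (H * G) = 0 :=
        hvan P.rep P.rep_nonzero P.mk_rep.symm
      rw [eval_mul] at h0
      have hH0 : eval P.rep H ≠ 0 := by
        intro h
        apply hHΓ P hPΓ
        have := (vanishesAt_iff hH P.rep P.rep_nonzero).mpr h
        rwa [P.mk_rep] at this
      have hG0 : eval P.rep G = 0 := by
        rcases mul_eq_zero.1 h0 with h | h
        · exact absurd h hH0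
        · exact h
      apply hGP
      have := (vanishesAt_iff hGh P.rep P.rep_nonzero).mpr hG0
      rwa [P.mk_rep] at this
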